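/- arXiv:0704.0041 — 3 statements merged into one kernel-verified Lean document; each statement's English description precedes it below -/
import Mathlib

section
/- Let M be a compact metrizable space, Y a compact metrizable space, θ : M × Y → M continuous, and ξ_y(m) := θ(m,y). Define α : C(M) → C(M × Y) by α(f)(m,y) = f(θ(m,y)), and let 𝒞 be the linear span of elements α(f)·(1 ⊗ ψ) with f ∈ C(M), ψ ∈ C(Y). Then 𝒞 is norm-dense in C(M × Y) if and only if ξ_y is injective for every y ∈ Y. -/
/-!
The functions `α(f)·(1 ⊗ ψ)`, hence all of their span, take equal values at `(m₁, y)` and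
`(m₂, y)` whenever `ξ_y m₁ = ξ_y m₂`, whereas continuous functions on the compact Hausdorff space
`M × Y` separate these points; this gives necessity. Conversely, the products `α(f)·(1 ⊗ ψ)` form
a star-closed submonoid, so their span is a star subalgebra, which separates points once every
`ξ_y` is injective; Stone–Weierstrass makes it dense.
-/

open Submodule

variable {X : Type*} [TopologicalSpace X] {𝕜 : Type*} [RCLike 𝕜]

theorem ContinuousMap.exists_apply_ne [T35Space X] {x x' : X} (h : x ≠ x') :
    ∃ f : C(X, 𝕜), f x ≠ f x' := by
  obtain ⟨f, hf, hfx⟩ := separatesPoints_continuous_of_t35Space h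
  exact ⟨⟨fun z => (f z : 𝕜), RCLike.continuous_ofReal.comp hf⟩, by simpa using hfx⟩

theorem ContinuousMap.eq_of_dense_of_forall_apply_eq [T35Space X] {S : Set C(X, 𝕜)}
    (hS : Dense S) {x x' : X} (h : ∀ g ∈ S, g x = g x') : x = x' := by
  by_contra hne
  obtain ⟨f, hf⟩ := ContinuousMap.exists_apply_ne (𝕜 := 𝕜) hne
  have hclosed : IsClosed {g : C(X, 𝕜) | g x = g x'} :=
    isClosed_eq (continuous_eval_const x) (continuous_eval_const x')
  exact hf (closure_minimal h hclosed (hS.closure_eq ▸ Set.mem_univ f))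

theorem StarAlgebra.adjoin_toSubmodule_eq_span {R A : Type*} [CommSemiring R] [StarRing R]
    [Semiring A] [StarRing A] [Algebra R A] [StarModule R A] (P : Submonoid A)
    (hP : star (P : Set A) ⊆ P) :
    Subalgebra.toSubmodule (StarAlgebra.adjoin R (P : Set A)).toSubalgebra = span R P := by
  rw [StarAlgebra.adjoin_eq_span, Set.union_eq_left.mpr hP, Submonoid.closure_eq]

section ActionProducts

variable {M Y : Type*} [TopologicalSpace M] [TopologicalSpace Y] (θ : C(M × Y, M))

variable (𝕜) in
def actionProducts : Submonoid C(M × Y, 𝕜) where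
  carrier := {g | ∃ (f : C(M, 𝕜)) (ψ : C(Y, 𝕜)), ∀ p : M × Y, g p = f (θ p) * ψ p.2}
  one_mem' := ⟨1, 1, fun p => by simp⟩
  mul_mem' := by
    rintro _ _ ⟨f₁, ψ₁, h₁⟩ ⟨f₂, ψ₂, h₂⟩
    exact ⟨f₁ * f₂, ψ₁ * ψ₂, fun p => by
      simp only [ContinuousMap.mul_apply, h₁, h₂]; ring⟩

variable {θ}

theorem star_actionProducts_subset : star (actionProducts 𝕜 θ : Set C(M × Y, 𝕜)) ⊆
    actionProducts 𝕜 θ := by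
  rintro g ⟨f, ψ, h⟩
  exact ⟨star f, star ψ, fun p => by simpa using congrArg star (h p)⟩

theorem apply_eq_of_mem_span_actionProducts {m₁ m₂ : M} {y : Y}
    (hθ : θ (m₁, y) = θ (m₂, y)) {g : C(M × Y, 𝕜)} (hg : g ∈ span 𝕜 (actionProducts 𝕜 θ : Set C(M × Y, 𝕜))) :
    g (m₁, y) = g (m₂, y) := by
  induction hg using span_induction with
  | mem _ hg =>
    obtain ⟨f, ψ, h⟩ := hg
    simp [h, hθ]
  | zero => rfl
  | add _ _ _ _ ha hb => simp [ha, hb]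
  | smul _ _ _ ha => simp [ha]

theorem separatesPoints_actionProducts [T35Space M] [T35Space Y]
    (hθ : ∀ y : Y, Function.Injective (fun m : M => θ (m, y))) :
    Set.SeparatesPoints ((⇑) '' (actionProducts 𝕜 θ : Set C(M × Y, 𝕜))) := by
  rintro ⟨m₁, y₁⟩ ⟨m₂, y₂⟩ hne
  by_cases hy : y₁ = y₂
  · subst hy
    have hm : θ (m₁, y₁) ≠ θ (m₂, y₁) := fun h => hne (by rw [hθ y₁ h])
    obtain ⟨f, hf⟩ := ContinuousMap.exists_apply_ne (𝕜 := 𝕜) hm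
    exact ⟨_, ⟨f.comp θ, ⟨f, 1, fun p => by simp⟩, rfl⟩, hf⟩
  · obtain ⟨ψ, hψ⟩ := ContinuousMap.exists_apply_ne (𝕜 := 𝕜) hy
    exact ⟨_, ⟨ψ.comp ContinuousMap.snd, ⟨1, ψ, fun p => by simp⟩, rfl⟩, hψ⟩

theorem dense_span_actionProducts [CompactSpace M] [CompactSpace Y] [T35Space M] [T35Space Y]
    (hθ : ∀ y : Y, Function.Injective (fun m : M => θ (m, y))) :
    Dense (span 𝕜 (actionProducts 𝕜 θ : Set C(M × Y, 𝕜)) : Set C(M × Y, 𝕜)) := by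
  set A := StarAlgebra.adjoin 𝕜 (actionProducts 𝕜 θ : Set C(M × Y, 𝕜))
  have hA : (A : Set C(M × Y, 𝕜)) = span 𝕜 (actionProducts 𝕜 θ : Set C(M × Y, 𝕜)) :=
    congrArg SetLike.coe
      (StarAlgebra.adjoin_toSubmodule_eq_span (actionProducts 𝕜 θ) star_actionProducts_subset)
  have hsep : A.SeparatesPoints :=
    Set.separatesPoints_mono (Set.image_mono (StarAlgebra.subset_adjoin 𝕜 _))
      (separatesPoints_actionProducts hθ)
  rw [← hA, dense_iff_closure_eq, ← StarSubalgebra.topologicalClosure_coe,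
    ContinuousMap.starSubalgebra_topologicalClosure_eq_top_of_separatesPoints A hsep]
  rfl

end ActionProducts

/-- Let `M`, `Y` be compact metrizable spaces, `θ : M × Y → M` continuous,
`ξ_y := θ (·, y)`, `α f = f ∘ θ`, and `𝒞` the linear span of the functions
`α(f)·(1 ⊗ ψ) : (m, y) ↦ f (θ (m, y)) ψ (y)` with `f ∈ C(M)`, `ψ ∈ C(Y)`.
Then `𝒞` is norm-dense in `C(M × Y)` if and only if `ξ_y` is injective for every `y`. -/
theorem span_action_dense_iff_injective
    (M Y : Type) [TopologicalSpace M] [CompactSpace M]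
    [TopologicalSpace.MetrizableSpace M]
    [TopologicalSpace Y] [CompactSpace Y] [TopologicalSpace.MetrizableSpace Y]
    (θ : C(M × Y, M)) :
    Dense ((Submodule.span ℂ
        {g : C(M × Y, ℂ) | ∃ (f : C(M, ℂ)) (ψ : C(Y, ℂ)),
          ∀ p : M × Y, g p = f (θ p) * ψ p.2} : Submodule ℂ C(M × Y, ℂ)) : Set C(M × Y, ℂ))
      ↔ ∀ y : Y, Function.Injective (fun m : M => θ (m, y)) := by
  refine ⟨fun hdense y m₁ m₂ hm => ?_, dense_span_actionProducts⟩
  exact congrArg Prod.fst (ContinuousMap.eq_of_dense_of_forall_apply_eq hdense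
    fun _ hg => apply_eq_of_mem_span_actionProducts hm hg)
end

section
/- Let C be a C*-algebra and F a nonempty collection of closed two-sided ideals of C, with I₀ = ⋂_{I ∈ F} I. Then for every x ∈ C, sup_{I ∈ F} ‖x + I‖_{C/I} = ‖x + I₀‖_{C/I₀}, where ‖x + I‖ = inf{‖x − y‖ : y ∈ I} is the quotient norm. -/
/-!
`≤` is monotonicity of `infDist`. For `≥`, let `S` be the supremum, `r > S`, `a = x⋆x`, and
`y = x (1 - c(a))` with `c(λ) = r² / max λ r²`, so that `‖x - y‖² = ‖c(a) a c(a)‖ ≤ r²`.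
Closed ideals are `⋆`-closed, so the quotient seminorm is a submultiplicative `⋆`-seminorm and
`infDist a I ≤ infDist x I ^ 2 < r²` for `I ∈ F`. A function `f` vanishing on `(-∞, r²]`
factors as `f(λ) = λᵏ g(λ)` with `‖g(a)‖ ≤ ‖f(a)‖ / r^{2k}`, whence
`infDist (f a) I ≤ (infDist a I / r²)ᵏ ‖f a‖` tends to `0` and `f(a) ∈ I`.
Thus `y` lies in every `I ∈ F`, and `infDist x (⋂ I) ≤ r`. The same construction for `x = y⋆`
with `y ∈ I` (where `x⋆x ∈ I`) approximates `y⋆` from `I`, which is why closed ideals are `⋆`-closed.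
-/

open Metric Filter Topology

namespace TwoSidedIdeal

section NonUnitalSeminormedRing

variable {R : Type*} [NonUnitalSeminormedRing R] (I : TwoSidedIdeal R)

lemma infDist_le_norm (x : R) : infDist x I ≤ ‖x‖ := by
  simpa using infDist_le_dist_of_mem (zero_mem I) (x := x)

lemma infDist_mul_le (x y : R) : infDist (x * y) I ≤ infDist x I * infDist y I := by
  have : Nonempty (I : Set R) := ⟨⟨0, zero_mem I⟩⟩
  rw [infDist_eq_iInf (x := x), Real.iInf_mul_of_nonneg infDist_nonneg]
  refine le_ciInf fun u => ?_
  rw [infDist_eq_iInf (x := y), Real.mul_iInf_of_nonneg dist_nonneg]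
  refine le_ciInf fun v => ?_
  have hmem : u * y + x * v - u * v ∈ I :=
    I.sub_mem (I.add_mem (I.mul_mem_right _ _ u.2) (I.mul_mem_left _ _ v.2))
      (I.mul_mem_right _ _ u.2)
  calc infDist (x * y) I ≤ dist (x * y) (u * y + x * v - u * v) := infDist_le_dist_of_mem hmem
    _ = ‖(x - u) * (y - v)‖ := by rw [dist_eq_norm]; congr 1; noncomm_ring
    _ ≤ dist x u * dist y v := by simpa only [dist_eq_norm] using norm_mul_le _ _

end NonUnitalSeminormedRing

lemma infDist_pow_succ_le {R : Type*} [SeminormedRing R] (I : TwoSidedIdeal R) (a : R)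
    (k : ℕ) : infDist (a ^ (k + 1)) I ≤ infDist a I ^ (k + 1) := by
  induction k with
  | zero => simp
  | succ k ih =>
    calc infDist (a ^ (k + 2)) I ≤ infDist (a ^ (k + 1)) I * infDist a I := by
          rw [pow_succ]; exact infDist_mul_le I _ _
      _ ≤ infDist a I ^ (k + 1) * infDist a I := by gcongr; exact infDist_nonneg
      _ = infDist a I ^ (k + 2) := (pow_succ _ _).symm

section CStarAlgebra

variable {A : Type*} [CStarAlgebra A]

lemma cfc_mem_of_infDist_lt {I : TwoSidedIdeal A} (hI : IsClosed (I : Set A)) {a : A}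
    (ha : IsSelfAdjoint a) {f : ℝ → ℝ} (hf : Continuous f) {t : ℝ} (ht : 0 < t)
    (hft : ∀ l ≤ t, f l = 0) (hat : infDist a I < t) : cfc f a ∈ I := by
  have hbound : ∀ k : ℕ, infDist (cfc f a) I ≤ (infDist a I / t) ^ (k + 1) * ‖cfc f a‖ := by
    intro k
    have hmax : ∀ l, 0 < max l t := fun l => ht.trans_le (le_max_right l t)
    set g : ℝ → ℝ := fun l => f l / max l t ^ (k + 1)
    have hg : Continuous g := hf.div (by fun_prop) fun l => (pow_pos (hmax l) _).ne'
    have hfactor : cfc f a = a ^ (k + 1) * cfc g a := by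
      rw [← cfc_pow_id (R := ℝ) a (k + 1), ← cfc_mul _ _ a]
      refine cfc_congr fun l _ => ?_
      rcases le_or_gt l t with hl | hl
      · simp [g, hft l hl]
      · have : l ^ (k + 1) ≠ 0 := pow_ne_zero _ (ht.trans hl).ne'
        simp only [g, max_eq_left hl.le]
        field_simp
    have hg_norm : ‖cfc g a‖ ≤ ‖cfc f a‖ / t ^ (k + 1) := by
      refine norm_cfc_le (by positivity) fun l hl => ?_
      rw [norm_div, norm_pow, Real.norm_of_nonneg (hmax l).le]
      exact div_le_div₀ (norm_nonneg _) (norm_apply_le_norm_cfc f a hl) (by positivity)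
        (pow_le_pow_left₀ ht.le (le_max_right l t) _)
    calc infDist (cfc f a) I ≤ infDist (a ^ (k + 1)) I * infDist (cfc g a) I :=
          hfactor ▸ infDist_mul_le I _ _
      _ ≤ infDist a I ^ (k + 1) * (‖cfc f a‖ / t ^ (k + 1)) :=
          mul_le_mul (infDist_pow_succ_le I a k) ((infDist_le_norm I _).trans hg_norm)
            infDist_nonneg (pow_nonneg infDist_nonneg _)
      _ = (infDist a I / t) ^ (k + 1) * ‖cfc f a‖ := by rw [div_pow]; ring
  have hlim : Tendsto (fun k : ℕ => (infDist a I / t) ^ (k + 1) * ‖cfc f a‖) atTop (𝓝 0) := by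
    simpa using ((tendsto_pow_atTop_nhds_zero_of_lt_one (div_nonneg infDist_nonneg ht.le)
      ((div_lt_one ht).2 hat)).comp (tendsto_add_atTop_nat 1)).mul_const ‖cfc f a‖
  exact (hI.mem_iff_infDist_zero ⟨0, zero_mem I⟩).2 <|
    le_antisymm (ge_of_tendsto' hlim hbound) infDist_nonneg

lemma continuous_div_max {t : ℝ} (ht : 0 < t) : Continuous fun l : ℝ => t / max l t :=
  continuous_const.div (by fun_prop) fun l => (ht.trans_le (le_max_right l t)).ne'

lemma norm_mul_cfc_div_max_le (x : A) {r : ℝ} (hr : 0 < r) :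
    ‖x * cfc (fun l => r ^ 2 / max l (r ^ 2)) (star x * x)‖ ≤ r := by
  set c := cfc (fun l => r ^ 2 / max l (r ^ 2)) (star x * x)
  have hcont := (continuous_div_max (pow_pos hr 2)).continuousOn (s := spectrum ℝ (star x * x))
  have hc : IsSelfAdjoint c := cfc_predicate _ _
  have hsq : ‖x * c‖ ^ 2 ≤ r ^ 2 :=
    calc ‖x * c‖ ^ 2 = ‖c * (star x * x) * c‖ := by
          rw [sq, ← CStarRing.norm_star_mul_self, star_mul, hc.star_eq]; simp only [mul_assoc]
      _ = ‖cfc (fun l => r ^ 2 / max l (r ^ 2) * l * (r ^ 2 / max l (r ^ 2))) (star x * x)‖ := by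
          rw [cfc_mul (fun l => r ^ 2 / max l (r ^ 2) * l) _ (star x * x)
              (hcont.mul continuousOn_id) hcont,
            cfc_mul _ (fun l => l) (star x * x) hcont continuousOn_id, cfc_id' ℝ (star x * x)]
      _ ≤ r ^ 2 := by
          refine norm_cfc_le (by positivity) fun l hl => ?_
          have hl0 : 0 ≤ l := spectrum_star_mul_self_nonneg l hl
          have hm : 0 < max l (r ^ 2) := (pow_pos hr 2).trans_le (le_max_right _ _)
          rw [Real.norm_of_nonneg (by positivity), div_mul_eq_mul_div, div_mul_div_comm,
            div_le_iff₀ (by positivity)]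
          have h1 : l ≤ max l (r ^ 2) := le_max_left _ _
          have h2 : r ^ 2 ≤ max l (r ^ 2) := le_max_right _ _
          nlinarith [mul_le_mul h1 h2 (by positivity) hm.le]
  exact (pow_le_pow_iff_left₀ (norm_nonneg _) hr.le two_ne_zero).1 hsq

lemma exists_norm_sub_le_and_mem_of_infDist_lt (x : A) {r : ℝ} (hr : 0 < r) :
    ∃ y, ‖x - y‖ ≤ r ∧ ∀ I : TwoSidedIdeal A, IsClosed (I : Set A) →
      infDist (star x * x) I < r ^ 2 → y ∈ I := by
  refine ⟨x * cfc (fun l => 1 - r ^ 2 / max l (r ^ 2)) (star x * x), ?_, fun I hI hxI => ?_⟩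
  · rw [cfc_sub (fun _ => 1) _ (star x * x) continuousOn_const
      (continuous_div_max (pow_pos hr 2)).continuousOn, cfc_const_one ℝ (star x * x), mul_sub,
      mul_one, sub_sub_cancel]
    exact norm_mul_cfc_div_max_le x hr
  · refine I.mul_mem_left _ _ (cfc_mem_of_infDist_lt hI (.star_mul_self x)
      (continuous_const.sub (continuous_div_max (pow_pos hr 2)))
      (pow_pos hr 2) (fun l hl => ?_) hxI)
    rw [max_eq_right hl, div_self (pow_pos hr 2).ne', sub_self]

lemma star_mem_of_isClosed {I : TwoSidedIdeal A} (hI : IsClosed (I : Set A)) {y : A}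
    (hy : y ∈ I) : star y ∈ I := by
  have hyy : star (star y) * star y ∈ I := by rw [star_star]; exact I.mul_mem_right _ _ hy
  refine hI.closure_subset_iff.2 le_rfl <| Metric.mem_closure_iff.2 fun ε hε => ?_
  obtain ⟨z, hz, hzI⟩ := exists_norm_sub_le_and_mem_of_infDist_lt (star y) (half_pos hε)
  refine ⟨z, hzI I hI (by rw [infDist_zero_of_mem hyy]; positivity), ?_⟩
  rw [dist_eq_norm]
  exact hz.trans_lt (half_lt_self hε)

lemma infDist_star {I : TwoSidedIdeal A} (hI : IsClosed (I : Set A)) (x : A) :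
    infDist (star x) I = infDist x I := by
  have hstar : star '' (I : Set A) = I := by
    ext y
    rw [Set.image_star, Set.mem_star]
    exact ⟨fun h => star_star y ▸ star_mem_of_isClosed hI h, star_mem_of_isClosed hI⟩
  conv_lhs => rw [← hstar]
  exact infDist_image star_isometry

end CStarAlgebra

end TwoSidedIdeal

open TwoSidedIdeal in
theorem sup_quotient_norm_eq_quotient_norm_inter_general
    {C : Type} [NormedRing C] [StarRing C] [CStarRing C] [CompleteSpace C]
    [NormedAlgebra ℂ C] [StarModule ℂ C]
    (F : Set (TwoSidedIdeal C))
    (hclosed : ∀ I ∈ F, IsClosed (I : Set C)) (x : C) :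
    (⨆ I ∈ F, Metric.infDist x (I : Set C)) = Metric.infDist x (⋂ I ∈ F, (I : Set C)) := by
  let _ : CStarAlgebra C := {}
  set S := ⨆ I ∈ F, infDist x (I : Set C)
  have hS : 0 ≤ S := Real.iSup_nonneg fun I => Real.iSup_nonneg fun _ => infDist_nonneg
  have hle : ∀ I ∈ F, infDist x (I : Set C) ≤ S := by
    refine le_ciSup₂ (f := fun I (_ : I ∈ F) => infDist x (I : Set C)) ⟨‖x‖, ?_⟩
    simp only [upperBounds, Set.mem_iUnion, Set.mem_range]
    rintro _ ⟨I, _, rfl⟩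
    exact infDist_le_norm I x
  refine le_antisymm (Real.iSup_le (fun I => Real.iSup_le (fun hI => infDist_le_infDist_of_subset
    (Set.biInter_subset_of_mem hI) ⟨0, by simp⟩) infDist_nonneg) infDist_nonneg) ?_
  refine le_of_forall_gt_imp_ge_of_dense fun r hr => ?_
  obtain ⟨y, hxy, hy⟩ := exists_norm_sub_le_and_mem_of_infDist_lt x (hS.trans_lt hr)
  have hyF : y ∈ ⋂ I ∈ F, (I : Set C) := Set.mem_iInter₂.2 fun I hI => hy I (hclosed I hI) <|
    calc infDist (star x * x) I ≤ infDist (star x) I * infDist x I := infDist_mul_le I _ _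
      _ = infDist x I ^ 2 := by rw [infDist_star (hclosed I hI), sq]
      _ < r ^ 2 := pow_lt_pow_left₀ ((hle I hI).trans_lt hr) infDist_nonneg two_ne_zero
  exact (infDist_le_dist_of_mem hyF).trans (by rwa [dist_eq_norm])

/-- Let `C` be a C*-algebra and `F` a nonempty collection of closed
two-sided ideals of `C`, with `I₀ = ⋂_{I ∈ F} I`. Then for every `x ∈ C`,
`sup_{I ∈ F} ‖x + I‖ = ‖x + I₀‖`, where the quotient norm `‖x + I‖ = inf {‖x - y‖ : y ∈ I}`
is expressed as the distance from `x` to the ideal. -/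
theorem sup_quotient_norm_eq_quotient_norm_inter
    {C : Type} [NormedRing C] [StarRing C] [CStarRing C] [CompleteSpace C]
    [NormedAlgebra ℂ C] [StarModule ℂ C]
    (F : Set (TwoSidedIdeal C)) (hF : F.Nonempty)
    (hclosed : ∀ I ∈ F, IsClosed (I : Set C)) (x : C) :
    (⨆ I ∈ F, Metric.infDist x (I : Set C)) = Metric.infDist x (⋂ I ∈ F, (I : Set C)) :=
  sup_quotient_norm_eq_quotient_norm_inter_general F hclosed x
end

section
/- Let S be a unital C*-algebra and suppose α(U) = U ⊗ A + U⁻¹ ⊗ B defines a unital *-homomorphism from C(𝕋) = C*(U) (U the standard unitary generator) to C(𝕋) ⊗ S. Then necessarily: A*A + B*B = 1 = AA* + BB*, A*B = B*A = AB* = BA* = 0, and AB + BA = 0. -/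
/-- The element `α(U)` evaluated at the point `e^{it}` of the torus: under the
identification `C(𝕋) ⊗ S ≅ C(𝕋, S)`, the element `U ⊗ A + U⁻¹ ⊗ B` is the function
`t ↦ e^{it} A + e^{-it} B`. -/
noncomputable def torusFamily {S : Type} [AddCommGroup S] [Module ℂ S]
    (A B : S) (t : ℝ) : S :=
  Complex.exp (t * Complex.I) • A + Complex.exp (-(t * Complex.I)) • B

/-- Extraction of Fourier coefficients: if `X + e^{-2it} P + e^{2it} Q = R` for all `t`,
then `X = R` and `P = Q = 0`. -/
lemma torus_key {S : Type} [AddCommGroup S] [Module ℂ S] (X P Q R : S)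
    (h : ∀ t : ℝ, X + Complex.exp (-(2*t*Complex.I)) • P + Complex.exp (2*t*Complex.I) • Q = R) :
    X = R ∧ P = 0 ∧ Q = 0 := by
  have h0 := h 0
  have h1 := h (Real.pi/2)
  have h2 := h (Real.pi/4)
  rw [show (2*((Real.pi/2:ℝ):ℂ)*Complex.I) = Real.pi*Complex.I by push_cast; ring] at h1
  rw [show (2*((Real.pi/4:ℝ):ℂ)*Complex.I) = ((Real.pi/2:ℝ):ℂ)*Complex.I by push_cast; ring] at h2
  rw [show Complex.exp ((Real.pi/2:ℝ)*Complex.I) = Complex.I by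
        rw [Complex.exp_mul_I]; push_cast; rw [Complex.cos_pi_div_two, Complex.sin_pi_div_two]; ring,
      Complex.exp_neg, Complex.exp_mul_I] at h2
  push_cast at h2
  rw [Complex.cos_pi_div_two, Complex.sin_pi_div_two] at h2
  rw [Complex.exp_neg, Complex.exp_pi_mul_I] at h1
  norm_num at h0 h1 h2
  have hX : X = R := by linear_combination (norm := module) (1/2 : ℂ) • h0 + (1/2 : ℂ) • h1
  have hPQ : P + Q = 0 := by linear_combination (norm := module) (1/2 : ℂ) • h0 - (1/2 : ℂ) • h1
  have h3 : (2*Complex.I) • Q = 0 := by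
    linear_combination (norm := module) h2 - hX + Complex.I • hPQ
  have h2I : (2*Complex.I) ≠ 0 := by simp [Complex.I_ne_zero]
  have hQ : Q = 0 := by
    have := congrArg (fun x => (2*Complex.I)⁻¹ • x) h3
    simpa [smul_smul, inv_mul_cancel₀ h2I] using this
  have hP : P = 0 := by rw [hQ, add_zero] at hPQ; exact hPQ
  exact ⟨hX, hP, hQ⟩

lemma star_torusFamily {S : Type} [NormedRing S] [StarRing S]
    [NormedAlgebra ℂ S] [StarModule ℂ S] (A B : S) (t : ℝ) :
    star (torusFamily A B t) =
      Complex.exp (-(t * Complex.I)) • star A + Complex.exp (t * Complex.I) • star B := by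
  simp only [torusFamily, star_add, star_smul, RCLike.star_def, ← Complex.exp_conj, map_neg,
    map_mul, Complex.conj_ofReal, Complex.conj_I, mul_neg, neg_neg]

lemma starTF_mul_TF {S : Type} [NormedRing S] [StarRing S]
    [NormedAlgebra ℂ S] [StarModule ℂ S] (A B : S) (t : ℝ) :
    star (torusFamily A B t) * torusFamily A B t =
      (star A * A + star B * B) + Complex.exp (-(2*t*Complex.I)) • (star A * B)
        + Complex.exp (2*t*Complex.I) • (star B * A) := by
  rw [star_torusFamily, torusFamily]
  simp only [add_mul, mul_add, smul_mul_smul_comm, ← Complex.exp_add]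
  rw [show -(↑t * Complex.I) + ↑t * Complex.I = 0 by ring,
      show (↑t : ℂ) * Complex.I + -(↑t * Complex.I) = 0 by ring,
      show -((↑t : ℂ) * Complex.I) + -(↑t * Complex.I) = -(2*↑t*Complex.I) by ring,
      show ((↑t : ℂ) * Complex.I) + (↑t * Complex.I) = (2*↑t*Complex.I) by ring,
      Complex.exp_zero, one_smul, one_smul]
  abel

lemma TF_mul_starTF {S : Type} [NormedRing S] [StarRing S]
    [NormedAlgebra ℂ S] [StarModule ℂ S] (A B : S) (t : ℝ) :
    torusFamily A B t * star (torusFamily A B t) =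
      (A * star A + B * star B) + Complex.exp (-(2*t*Complex.I)) • (B * star A)
        + Complex.exp (2*t*Complex.I) • (A * star B) := by
  rw [star_torusFamily, torusFamily]
  simp only [add_mul, mul_add, smul_mul_smul_comm, ← Complex.exp_add]
  rw [show (↑t : ℂ) * Complex.I + -(↑t * Complex.I) = 0 by ring,
      show -(↑t * Complex.I) + ↑t * Complex.I = 0 by ring,
      show -((↑t : ℂ) * Complex.I) + -(↑t * Complex.I) = -(2*↑t*Complex.I) by ring,
      show ((↑t : ℂ) * Complex.I) + (↑t * Complex.I) = (2*↑t*Complex.I) by ring,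
      Complex.exp_zero, one_smul, one_smul]
  abel

lemma TF_mul_TF {S : Type} [NormedRing S]
    [NormedAlgebra ℂ S] (A B : S) (t : ℝ) :
    torusFamily A B t * torusFamily A B t =
      (A * B + B * A) + Complex.exp (-(2*t*Complex.I)) • (B * B)
        + Complex.exp (2*t*Complex.I) • (A * A) := by
  rw [torusFamily]
  simp only [add_mul, mul_add, smul_mul_smul_comm, ← Complex.exp_add]
  rw [show (↑t : ℂ) * Complex.I + -(↑t * Complex.I) = 0 by ring,
      show -(↑t * Complex.I) + ↑t * Complex.I = 0 by ring,
      show -((↑t : ℂ) * Complex.I) + -(↑t * Complex.I) = -(2*↑t*Complex.I) by ring,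
      show ((↑t : ℂ) * Complex.I) + (↑t * Complex.I) = (2*↑t*Complex.I) by ring,
      Complex.exp_zero, one_smul, one_smul]
  abel

/-- Suppose `α(U) = U ⊗ A + U⁻¹ ⊗ B` defines a unital *-homomorphism
`C(𝕋) → C(𝕋) ⊗ S ≅ C(𝕋, S)`; i.e. the function `t ↦ e^{it} A + e^{-it} B` is unitary-valued.
Suppose moreover (as forced by commutation of `α` with the Laplacian `ℒ(Uⁿ) = -n²Uⁿ`) that
`α(U)²` has only Fourier modes `±2`, i.e. the coefficient of `1 ⊗ 1` in `α(U)²` vanishes.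
Then `A*A + B*B = 1 = AA* + BB*`, `A*B = B*A = AB* = BA* = 0`, and `AB + BA = 0`. -/
theorem torus_action_coefficient_relations
    {S : Type} [NormedRing S] [StarRing S] [CStarRing S] [CompleteSpace S]
    [NormedAlgebra ℂ S] [StarModule ℂ S]
    (A B : S)
    (hunitary : ∀ t : ℝ,
      star (torusFamily A B t) * torusFamily A B t = 1 ∧
      torusFamily A B t * star (torusFamily A B t) = 1)
    (hLaplacian : ∃ C D : S, ∀ t : ℝ,
      torusFamily A B t * torusFamily A B t =
        Complex.exp (2 * t * Complex.I) • C + Complex.exp (-(2 * t * Complex.I)) • D) :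
    star A * A + star B * B = 1 ∧
    A * star A + B * star B = 1 ∧
    star A * B = 0 ∧ star B * A = 0 ∧ A * star B = 0 ∧ B * star A = 0 ∧
    A * B + B * A = 0 := by
  obtain ⟨hX1, hP1, hQ1⟩ := torus_key (star A * A + star B * B) (star A * B) (star B * A) 1
    (fun t => by rw [← starTF_mul_TF]; exact (hunitary t).1)
  obtain ⟨hX2, hP2, hQ2⟩ := torus_key (A * star A + B * star B) (B * star A) (A * star B) 1
    (fun t => by rw [← TF_mul_starTF]; exact (hunitary t).2)
  obtain ⟨C, D, hL⟩ := hLaplacian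
  obtain ⟨hX3, -, -⟩ := torus_key (A * B + B * A) (B * B - D) (A * A - C) 0
    (fun t => by
      have h1 := TF_mul_TF A B t
      have h2 := hL t
      rw [h2] at h1
      linear_combination (norm := module) -h1)
  exact ⟨hX1, hX2, hP1, hQ1, hQ2, hP2, hX3⟩
end
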